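/- arXiv:1105.3046 — 5 statements merged into one kernel-verified Lean document; each statement's English description precedes it below -/
import Mathlib

section
/- Let M, K be real symmetric positive semidefinite n×n matrices with M positive definite, and Δt > 0 such that M - (Δt²/4) K is positive definite. Then for any sequence (P^n) in ℝⁿ, the quadratic form E^{n+1/2} = ½( ‖(P^{n+1}-P^n)/Δt‖²_M + ⟨K P^n, P^{n+1}⟩ ) is nonnegative. (Hint: writing P^n = I - (Δt/2)D and P^{n+1} = I + (Δt/2)D with I = (P^{n+1}+P^n)/2, D = (P^{n+1}-P^n)/Δt, one gets E = ½(‖D‖²_{M - (Δt²/4)K} + ‖I‖²_K).) -/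
/-!
Writing `D = (q - p)/Δt` and `I = (p + q)/2`, so that `p = I - (Δt/2) D` and `q = I + (Δt/2) D`,
the symmetry of `K` turns the energy into `½(‖D‖²_{M - (Δt²/4)K} + ‖I‖²_K)`,
a sum of two nonnegative quadratic forms.
-/

open Matrix

namespace Matrix.IsSymm

variable {n R : Type*} [Fintype n] [CommRing R] {A : Matrix n n R}

theorem mulVec_dotProduct_comm (hA : A.IsSymm) (x y : n → R) :
    A *ᵥ x ⬝ᵥ y = A *ᵥ y ⬝ᵥ x := by
  rw [dotProduct_comm, dotProduct_mulVec, ← mulVec_transpose, hA.eq, dotProduct_comm]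

theorem four_mul_mulVec_dotProduct (hA : A.IsSymm) (p q : n → R) :
    4 * (A *ᵥ p ⬝ᵥ q) = A *ᵥ (p + q) ⬝ᵥ (p + q) - A *ᵥ (q - p) ⬝ᵥ (q - p) := by
  simp only [mulVec_add, mulVec_sub, add_dotProduct, sub_dotProduct, dotProduct_add,
    dotProduct_sub, hA.mulVec_dotProduct_comm q p]
  ring

end Matrix.IsSymm

theorem Matrix.PosSemidef.mulVec_dotProduct_self_nonneg {n : Type*} [Fintype n]
    {A : Matrix n n ℝ} (hA : A.PosSemidef) (x : n → ℝ) : 0 ≤ A *ᵥ x ⬝ᵥ x := by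
  simpa [dotProduct_comm] using hA.dotProduct_mulVec_nonneg x

theorem leapfrog_energy_eq {n R : Type*} [Fintype n] [Field R] [CharZero R]
    {M K : Matrix n n R} (hK : K.IsSymm) {Δt : R} (hΔt : Δt ≠ 0) (p q : n → R) :
    M *ᵥ (Δt⁻¹ • (q - p)) ⬝ᵥ (Δt⁻¹ • (q - p)) + K *ᵥ p ⬝ᵥ q =
      (M - (Δt ^ 2 / 4) • K) *ᵥ (Δt⁻¹ • (q - p)) ⬝ᵥ (Δt⁻¹ • (q - p)) +
        K *ᵥ ((2 : R)⁻¹ • (p + q)) ⬝ᵥ ((2 : R)⁻¹ • (p + q)) := by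
  have hpolar := hK.four_mul_mulVec_dotProduct p q
  have hinv : Δt * Δt⁻¹ = 1 := mul_inv_cancel₀ hΔt
  simp only [sub_mulVec, smul_mulVec, mulVec_smul, smul_dotProduct, dotProduct_smul,
    smul_eq_mul, sub_dotProduct]
  -- the second term rewrites `(Δt * Δt⁻¹) ^ 2` as `1`
  linear_combination 4⁻¹ * hpolar + (Δt * Δt⁻¹ + 1) / 4 * (K *ᵥ (q - p) ⬝ᵥ (q - p)) * hinv

theorem leapfrog_energy_nonneg_general
    {d : ℕ} (M K : Matrix (Fin d) (Fin d) ℝ)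
    (hK : K.PosSemidef) (Δt : ℝ) (hΔt : 0 < Δt)
    (hCFL : (M - (Δt ^ 2 / 4) • K).PosDef) :
    ∀ p q : Fin d → ℝ,
      0 ≤ (1 / 2) *
        ((M.mulVec (Δt⁻¹ • (q - p)) ⬝ᵥ (Δt⁻¹ • (q - p))) + (K.mulVec p ⬝ᵥ q)) := by
  intro p q
  have hKsymm : K.IsSymm := isHermitian_iff_isSymm.mp hK.isHermitian
  rw [leapfrog_energy_eq hKsymm hΔt.ne']
  exact mul_nonneg (by norm_num)
    (add_nonneg (hCFL.posSemidef.mulVec_dotProduct_self_nonneg _)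
      (hK.mulVec_dotProduct_self_nonneg _))

/-- If `M` is positive definite, `K` positive semidefinite and `M - (Δt²/4)K` is positive
definite, then the discrete leapfrog energy
`½(‖(q - p)/Δt‖²_M + ⟨K p, q⟩)` is nonnegative for all vectors `p, q`. -/
theorem leapfrog_energy_nonneg
    {d : ℕ} (M K : Matrix (Fin d) (Fin d) ℝ)
    (hM : M.PosDef) (hK : K.PosSemidef) (Δt : ℝ) (hΔt : 0 < Δt)
    (hCFL : (M - (Δt ^ 2 / 4) • K).PosDef) :
    ∀ p q : Fin d → ℝ,
      0 ≤ (1 / 2) *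
        ((M.mulVec (Δt⁻¹ • (q - p)) ⬝ᵥ (Δt⁻¹ • (q - p))) + (K.mulVec p ⬝ᵥ q)) :=
  leapfrog_energy_nonneg_general M K hK Δt hΔt hCFL
end

section
/- Let M, K be symmetric positive definite n×n matrices, σ ≥ 0, Δt > 0, and let (P^n) in ℝⁿ satisfy M( (P^{n+1} - 2P^n + P^{n-1})/Δt² + 2σ (P^{n+1} - P^{n-1})/(2Δt) + σ² P^n ) + K P^n = 0. Define K_σ = K + σ² M and E^{n+1/2} = ½( ‖(P^{n+1}-P^n)/Δt‖²_M + ⟨K_σ P^n, P^{n+1}⟩ ). Then (E^{n+1/2} - E^{n-1/2})/Δt = -2σ ‖(P^{n+1} - P^{n-1})/(2Δt)‖²_M ≤ 0; in particular (E^{n+1/2}) is nonincreasing. -/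
/-!
Pair the scheme with the centred difference `Pⁿ⁺¹ - Pⁿ⁻¹`. Writing it as
`(Pⁿ⁺¹ - Pⁿ) + (Pⁿ - Pⁿ⁻¹)` and the second difference as `(Pⁿ⁺¹ - Pⁿ) - (Pⁿ - Pⁿ⁻¹)`, the
inertia term becomes a difference of squares `‖Pⁿ⁺¹ - Pⁿ‖²_M - ‖Pⁿ - Pⁿ⁻¹‖²_M`, and by symmetry
of `K_σ` the stiffness term is `⟨K_σ Pⁿ, Pⁿ⁺¹⟩ - ⟨K_σ Pⁿ⁻¹, Pⁿ⟩`; together they telescope to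
`E^{n+1/2} - E^{n-1/2}`, while the damping term leaves `-2σΔt ‖(Pⁿ⁺¹ - Pⁿ⁻¹)/(2Δt)‖²_M`.
-/

open Matrix

namespace Matrix

variable {n R : Type*} [Fintype n] [CommRing R] {A : Matrix n n R}

theorem IsSymm.mulVec_dotProduct_comm_s5 (hA : A.IsSymm) (u v : n → R) :
    A *ᵥ u ⬝ᵥ v = A *ᵥ v ⬝ᵥ u := by
  rw [dotProduct_comm, dotProduct_mulVec, ← mulVec_transpose, hA.eq]

theorem IsSymm.mulVec_dotProduct_self_sub (hA : A.IsSymm) (x y : n → R) :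
    A *ᵥ x ⬝ᵥ x - A *ᵥ y ⬝ᵥ y = A *ᵥ (x - y) ⬝ᵥ (x + y) := by
  simp only [mulVec_sub, sub_dotProduct, dotProduct_add, hA.mulVec_dotProduct_comm_s5 y x]
  ring

end Matrix

variable {n : Type*} [Fintype n]

/-- `E^{n+1/2}` with `p = Pⁿ` and `q = Pⁿ⁺¹`. -/
noncomputable def halfStepEnergy (M Kσ : Matrix n n ℝ) (Δt : ℝ) (p q : n → ℝ) : ℝ :=
  (1 / 2) * (M *ᵥ (Δt⁻¹ • (q - p)) ⬝ᵥ (Δt⁻¹ • (q - p)) + Kσ *ᵥ p ⬝ᵥ q)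

theorem halfStepEnergy_sub {M Kσ : Matrix n n ℝ} (hM : M.IsSymm) (hKσ : Kσ.IsSymm) (Δt : ℝ)
    (a b c : n → ℝ) :
    halfStepEnergy M Kσ Δt b a - halfStepEnergy M Kσ Δt c b =
      (1 / 2) * ((M *ᵥ ((Δt ^ 2)⁻¹ • (a - (2 : ℝ) • b + c)) + Kσ *ᵥ b) ⬝ᵥ (a - c)) := by
  have hquad := hM.mulVec_dotProduct_self_sub (a - b) (b - c)
  rw [show a - b - (b - c) = a - (2 : ℝ) • b + c by module,
    show a - b + (b - c) = a - c by abel] at hquad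
  simp only [halfStepEnergy, mulVec_smul, smul_dotProduct, dotProduct_smul, smul_eq_mul,
    add_dotProduct, hKσ.mulVec_dotProduct_comm_s5 c b]
  linear_combination (1 / 2 * Δt⁻¹ ^ 2) * hquad - (1 / 2) * dotProduct_sub (Kσ *ᵥ b) a c

theorem schemeA_eq_neg_damping {M K : Matrix n n ℝ} (σ Δt : ℝ) (a b c : n → ℝ)
    (hrec : M *ᵥ ((Δt ^ 2)⁻¹ • (a - (2 : ℝ) • b + c) + (2 * σ) • ((2 * Δt)⁻¹ • (a - c))
      + σ ^ 2 • b) + K *ᵥ b = 0) :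
    M *ᵥ ((Δt ^ 2)⁻¹ • (a - (2 : ℝ) • b + c)) + (K + σ ^ 2 • M) *ᵥ b =
      -((2 * σ) • M *ᵥ ((2 * Δt)⁻¹ • (a - c))) := by
  rw [← sub_eq_zero, ← hrec]
  simp only [mulVec_add, add_mulVec, smul_mulVec, mulVec_smul]
  abel

theorem halfStepEnergy_sub_of_schemeA {M K : Matrix n n ℝ} (hM : M.IsSymm) (hK : K.IsSymm)
    {σ Δt : ℝ} (hΔt : Δt ≠ 0) (a b c : n → ℝ)
    (hrec : M *ᵥ ((Δt ^ 2)⁻¹ • (a - (2 : ℝ) • b + c) + (2 * σ) • ((2 * Δt)⁻¹ • (a - c))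
      + σ ^ 2 • b) + K *ᵥ b = 0) :
    halfStepEnergy M (K + σ ^ 2 • M) Δt b a - halfStepEnergy M (K + σ ^ 2 • M) Δt c b =
      -2 * σ * Δt * (M *ᵥ ((2 * Δt)⁻¹ • (a - c)) ⬝ᵥ ((2 * Δt)⁻¹ • (a - c))) := by
  rw [halfStepEnergy_sub hM (hK.add (hM.smul _)), schemeA_eq_neg_damping σ Δt a b c hrec]
  set w := (2 * Δt)⁻¹ • (a - c)
  have hac : a - c = (2 * Δt) • w := by
    rw [smul_smul, mul_inv_cancel₀ (by positivity), one_smul]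
  rw [hac]
  simp only [neg_dotProduct, smul_dotProduct, dotProduct_smul, smul_eq_mul]
  ring

/-- Discrete energy identity for scheme A with equal constant damping `σ`:
with `K_σ = K + σ²M`, the energy
`Eⁿ⁺¹ᐟ² = ½(‖(Pⁿ⁺¹-Pⁿ)/Δt‖²_M + ⟨K_σ Pⁿ, Pⁿ⁺¹⟩)` satisfies
`(Eⁿ⁺¹ᐟ² - Eⁿ⁻¹ᐟ²)/Δt = -2σ‖(Pⁿ⁺¹-Pⁿ⁻¹)/(2Δt)‖²_M ≤ 0`. -/
theorem schemeA_energy_identity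
    {d : ℕ} (M K : Matrix (Fin d) (Fin d) ℝ)
    (hM : M.PosDef) (hK : K.PosDef) (σ Δt : ℝ) (hσ : 0 ≤ σ) (hΔt : 0 < Δt)
    (P : ℤ → Fin d → ℝ)
    (hrec : ∀ n : ℤ,
      M.mulVec ((Δt ^ 2)⁻¹ • (P (n + 1) - (2 : ℝ) • P n + P (n - 1))
          + (2 * σ) • ((2 * Δt)⁻¹ • (P (n + 1) - P (n - 1)))
          + σ ^ 2 • P n)
        + K.mulVec (P n) = 0)
    (Kσ : Matrix (Fin d) (Fin d) ℝ) (hKσ : Kσ = K + σ ^ 2 • M)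
    (E : ℤ → ℝ)
    (hE : ∀ n : ℤ, E n = (1 / 2) *
      ((M.mulVec (Δt⁻¹ • (P (n + 1) - P n)) ⬝ᵥ (Δt⁻¹ • (P (n + 1) - P n)))
        + (Kσ.mulVec (P n) ⬝ᵥ P (n + 1)))) :
    ∀ n : ℤ,
      (E n - E (n - 1)) / Δt =
        -2 * σ * (M.mulVec ((2 * Δt)⁻¹ • (P (n + 1) - P (n - 1)))
          ⬝ᵥ ((2 * Δt)⁻¹ • (P (n + 1) - P (n - 1))))
      ∧ E n ≤ E (n - 1) := by
  subst hKσ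
  have hE' : ∀ m, E m = halfStepEnergy M (K + σ ^ 2 • M) Δt (P m) (P (m + 1)) := hE
  intro n
  set w := (2 * Δt)⁻¹ • (P (n + 1) - P (n - 1))
  have hdiff : E n - E (n - 1) = -2 * σ * Δt * (M *ᵥ w ⬝ᵥ w) := by
    rw [hE', hE', sub_add_cancel]
    exact halfStepEnergy_sub_of_schemeA (isHermitian_iff_isSymm.mp hM.isHermitian)
      (isHermitian_iff_isSymm.mp hK.isHermitian) hΔt.ne' _ _ _ (hrec n)
  have hw : 0 ≤ M *ᵥ w ⬝ᵥ w := by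
    have := hM.posSemidef.dotProduct_mulVec_nonneg w
    rwa [star_trivial, dotProduct_comm] at this
  refine ⟨by rw [hdiff]; field_simp, ?_⟩
  nlinarith [mul_nonneg (mul_nonneg hσ hΔt.le) hw]
end

section
/- Let M, K be symmetric positive definite n×n matrices, σ ≥ 0, Δt > 0, and suppose M - (Δt²/4)(K + σ² M) is positive definite. Then every solution (P^n) of M((P^{n+1} - 2P^n + P^{n-1})/Δt² + σ (P^{n+1} - P^{n-1})/Δt + σ² P^n) + K P^n = 0 is bounded: there exists C ≥ 0 depending only on P⁰, P¹, M, K, σ, Δt such that ‖P^n‖ ≤ C for all n ≥ 0. -/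
/-!
The discrete energy `E^{n+1/2} = ½(‖(P^{n+1} - P^n)/Δt‖²_M + ⟨(K + σ²M) P^n, P^{n+1}⟩)`
satisfies `E^{n-1/2} - E^{n+1/2} = σ/(2Δt) ‖P^{n+1} - P^{n-1}‖²_M ≥ 0`, which one gets by
testing the recurrence against `P^{n+1} - P^{n-1}`. Writing `A = K + σ²M`, the energy equals
`½(‖D‖²_{M - (Δt²/4)A} + ‖I‖²_A)` with `D = (P^{n+1} - P^n)/Δt` and `I = (P^n + P^{n+1})/2`,
and under the CFL condition both forms are positive definite: the nonincreasing energy bounds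
`D` and `I`, hence `P^n = I - (Δt/2) D`.
-/

open Matrix

theorem exists_pos_mul_sq_norm_le_of_homogeneous {E : Type*} [NormedAddCommGroup E]
    [NormedSpace ℝ E] [FiniteDimensional ℝ E] {q : E → ℝ} (hq : Continuous q)
    (hsmul : ∀ (t : ℝ) (x : E), q (t • x) = t ^ 2 * q x) (hpos : ∀ x, x ≠ 0 → 0 < q x) :
    ∃ c, 0 < c ∧ ∀ x, c * ‖x‖ ^ 2 ≤ q x := by
  rcases subsingleton_or_nontrivial E with hE | hE
  · refine ⟨1, one_pos, fun x => ?_⟩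
    simp [Subsingleton.elim x 0, show q 0 = 0 by simpa using hsmul 0 0]
  obtain ⟨x₀, hx₀, hmin⟩ := (isCompact_sphere (0 : E) 1).exists_isMinOn
    (NormedSpace.sphere_nonempty.mpr zero_le_one) hq.continuousOn
  refine ⟨q x₀, hpos x₀ (ne_zero_of_mem_unit_sphere ⟨x₀, hx₀⟩), fun x => ?_⟩
  rcases eq_or_ne x 0 with rfl | hx
  · simp [show q 0 = 0 by simpa using hsmul 0 0]
  have hxn : ‖x‖ ≠ 0 := norm_ne_zero_iff.mpr hx
  have hu : ‖x‖⁻¹ • x ∈ Metric.sphere (0 : E) 1 := by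
    simp [norm_smul, inv_mul_cancel₀ hxn]
  calc q x₀ * ‖x‖ ^ 2 ≤ q (‖x‖⁻¹ • x) * ‖x‖ ^ 2 := by gcongr; exact hmin hu
    _ = q x := by rw [hsmul, mul_comm, ← mul_assoc, ← mul_pow, mul_inv_cancel₀ hxn, one_pow,
      one_mul]

namespace Matrix

variable {ι : Type*} [Fintype ι]

theorem IsSymm.dotProduct_mulVec_comm {α : Type*} [CommSemiring α] {A : Matrix ι ι α}
    (hA : A.IsSymm) (x y : ι → α) : x ⬝ᵥ A *ᵥ y = y ⬝ᵥ A *ᵥ x := by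
  simpa [hA.eq] using dotProduct_transpose_mulVec A x y

theorem PosDef.exists_pos_mul_sq_norm_le {A : Matrix ι ι ℝ} (hA : A.PosDef) :
    ∃ c, 0 < c ∧ ∀ x : ι → ℝ, c * ‖x‖ ^ 2 ≤ x ⬝ᵥ A *ᵥ x :=
  exists_pos_mul_sq_norm_le_of_homogeneous (by fun_prop)
    (fun t x => by simp only [mulVec_smul, dotProduct_smul, smul_dotProduct, smul_eq_mul]; ring)
    (fun _ hx => by simpa using hA.dotProduct_mulVec_pos hx)

end Matrix

section Energy

variable {ι : Type*} [Fintype ι] (M A : Matrix ι ι ℝ) (Δt : ℝ)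

/-- `E^{n+1/2}` of the paper, with `u = P^n`, `v = P^{n+1}` and `A = K + σ²M`. -/
noncomputable def leapfrogEnergy (u v : ι → ℝ) : ℝ :=
  ((Δt ^ 2)⁻¹ * ((v - u) ⬝ᵥ M *ᵥ (v - u)) + u ⬝ᵥ A *ᵥ v) / 2

variable {M A Δt}

theorem leapfrogEnergy_sub_leapfrogEnergy {K : Matrix ι ι ℝ} (hM : M.IsSymm) (hK : K.IsSymm)
    {σ : ℝ} (hΔt : Δt ≠ 0) {u v w : ι → ℝ}
    (h : M *ᵥ ((Δt ^ 2)⁻¹ • (w - (2 : ℝ) • v + u) + σ • (Δt⁻¹ • (w - u)) + σ ^ 2 • v)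
      + K *ᵥ v = 0) :
    leapfrogEnergy M (K + σ ^ 2 • M) Δt u v - leapfrogEnergy M (K + σ ^ 2 • M) Δt v w
      = σ / (2 * Δt) * ((w - u) ⬝ᵥ M *ᵥ (w - u)) := by
  have htest := congrArg ((w - u) ⬝ᵥ ·) h
  simp only [leapfrogEnergy, dotProduct_add, dotProduct_sub, sub_dotProduct, mulVec_add,
    mulVec_sub, mulVec_smul, add_mulVec, smul_mulVec, dotProduct_smul, smul_eq_mul,
    dotProduct_zero] at htest ⊢
  rw [hM.dotProduct_mulVec_comm u w, hM.dotProduct_mulVec_comm u v,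
    hK.dotProduct_mulVec_comm u v, hM.dotProduct_mulVec_comm v w,
    hK.dotProduct_mulVec_comm v w] at *
  field_simp at htest ⊢
  linarith

theorem leapfrogEnergy_eq (hM : M.IsSymm) (hA : A.IsSymm) (hΔt : Δt ≠ 0) (u v : ι → ℝ) :
    leapfrogEnergy M A Δt u v
      = ((Δt⁻¹ • (v - u)) ⬝ᵥ (M - (Δt ^ 2 / 4) • A) *ᵥ (Δt⁻¹ • (v - u))
        + ((1 / 2 : ℝ) • (u + v)) ⬝ᵥ A *ᵥ ((1 / 2 : ℝ) • (u + v))) / 2 := by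
  simp only [leapfrogEnergy, dotProduct_add, dotProduct_sub, sub_dotProduct, add_dotProduct,
    mulVec_add, mulVec_sub, mulVec_smul, sub_mulVec, smul_mulVec, dotProduct_smul,
    smul_dotProduct, smul_eq_mul]
  rw [hM.dotProduct_mulVec_comm v u, hA.dotProduct_mulVec_comm v u]
  field_simp
  ring

theorem exists_norm_le_mul_sqrt_leapfrogEnergy (hM : M.IsSymm) (hA : A.PosDef)
    (hCFL : (M - (Δt ^ 2 / 4) • A).PosDef) (hΔt : 0 < Δt) :
    ∃ C, 0 ≤ C ∧ ∀ u v : ι → ℝ, ‖u‖ ≤ C * √(leapfrogEnergy M A Δt u v) := by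
  obtain ⟨c₁, hc₁, hD⟩ := hCFL.exists_pos_mul_sq_norm_le
  obtain ⟨c₂, hc₂, hI⟩ := hA.exists_pos_mul_sq_norm_le
  refine ⟨√(2 / c₂) + Δt / 2 * √(2 / c₁), by positivity, fun u v => ?_⟩
  set D := Δt⁻¹ • (v - u)
  set I := (1 / 2 : ℝ) • (u + v)
  set E := leapfrogEnergy M A Δt u v
  have hDI : c₁ * ‖D‖ ^ 2 + c₂ * ‖I‖ ^ 2 ≤ 2 * E := by
    have := leapfrogEnergy_eq hM (isHermitian_iff_isSymm.mp hA.isHermitian) hΔt.ne' u v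
    linarith [hD D, hI I]
  have hnorm_le {c x : ℝ} (hc : 0 < c) (hx : c * x ^ 2 ≤ 2 * E) : |x| ≤ √(2 / c) * √E := by
    rw [← Real.sqrt_mul (by positivity)]
    exact Real.abs_le_sqrt (by rw [div_mul_eq_mul_div, le_div_iff₀ hc]; linarith)
  have hDn := hnorm_le hc₁ (x := ‖D‖) (by linarith [mul_nonneg hc₂.le (sq_nonneg ‖I‖)])
  have hIn := hnorm_le hc₂ (x := ‖I‖) (by linarith [mul_nonneg hc₁.le (sq_nonneg ‖D‖)])
  rw [abs_norm] at hDn hIn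
  have hu : u = I - (Δt / 2) • D := by
    simp only [D, I, smul_sub, smul_add, smul_smul]
    field_simp
    module
  calc ‖u‖ = ‖I - (Δt / 2) • D‖ := by rw [← hu]
    _ ≤ ‖I‖ + ‖(Δt / 2) • D‖ := norm_sub_le _ _
    _ = ‖I‖ + Δt / 2 * ‖D‖ := by rw [norm_smul (Δt / 2) D, Real.norm_of_nonneg (by positivity)]
    _ ≤ _ := by rw [add_mul, mul_assoc]; gcongr

end Energy

/-- Stability of scheme A under its modified CFL condition: if
`M - (Δt²/4)(K + σ²M)` is positive definite, then every solution of the damped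
leapfrog recurrence is bounded. -/
theorem schemeA_stability
    {d : ℕ} (M K : Matrix (Fin d) (Fin d) ℝ)
    (hM : M.PosDef) (hK : K.PosDef) (σ Δt : ℝ) (hσ : 0 ≤ σ) (hΔt : 0 < Δt)
    (hCFL : (M - (Δt ^ 2 / 4) • (K + σ ^ 2 • M)).PosDef)
    (P : ℕ → Fin d → ℝ)
    (hrec : ∀ n : ℕ, 1 ≤ n →
      M.mulVec ((Δt ^ 2)⁻¹ • (P (n + 1) - (2 : ℝ) • P n + P (n - 1))
          + σ • (Δt⁻¹ • (P (n + 1) - P (n - 1)))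
          + σ ^ 2 • P n)
        + K.mulVec (P n) = 0) :
    ∃ C : ℝ, 0 ≤ C ∧ ∀ n : ℕ, ‖P n‖ ≤ C := by
  have hMs : M.IsSymm := isHermitian_iff_isSymm.mp hM.isHermitian
  have hA : (K + σ ^ 2 • M).PosDef := hK.add_posSemidef (hM.posSemidef.smul (sq_nonneg σ))
  obtain ⟨C, hC, hbound⟩ := exists_norm_le_mul_sqrt_leapfrogEnergy hMs hA hCFL hΔt
  set E := fun n => leapfrogEnergy M (K + σ ^ 2 • M) Δt (P n) (P (n + 1))
  have hE : Antitone E := antitone_nat_of_succ_le fun n => by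
    have hdiss := leapfrogEnergy_sub_leapfrogEnergy hMs
      (isHermitian_iff_isSymm.mp hK.isHermitian) hΔt.ne' (hrec (n + 1) (Nat.le_add_left 1 n))
    have hdamp := hM.posSemidef.dotProduct_mulVec_nonneg (P (n + 2) - P n)
    simp only [Nat.add_sub_cancel, star_trivial] at hdiss hdamp
    simp only [E]
    linarith [mul_nonneg (show 0 ≤ σ / (2 * Δt) by positivity) hdamp]
  refine ⟨C * √(E 0), by positivity, fun n => (hbound (P n) (P (n + 1))).trans ?_⟩
  gcongr
  exact hE (Nat.zero_le n)
end

section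
/- Let σ ≥ 0, λ > 0, Δt > 0 with λ Δt² < 4, and consider the scalar scheme-B recurrence obtained for one stiffness mode. Then every solution of the recurrence a p^{n+1} + b p^n + c p^{n-1} = 0 with a = (1 + σΔt/2)², c = (1 - σΔt/2)², b = λΔt² + 2(σ²Δt²/4 - 1) is bounded: sup_n |p^n| < ∞. -/
/-- Scalar mode stability of scheme B: with `a = (1 + σΔt/2)²`, `c = (1 - σΔt/2)²`,
`b = λΔt² + 2(σ²Δt²/4 - 1)`, if `σ ≥ 0`, `λ > 0` and `λΔt² < 4`, every solution of
`a pⁿ⁺¹ + b pⁿ + c pⁿ⁻¹ = 0` is bounded. -/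
theorem schemeB_scalar_mode_stability
    (σ lam Δt : ℝ) (hσ : 0 ≤ σ) (hlam : 0 < lam) (hΔt : 0 < Δt)
    (hCFL : lam * Δt ^ 2 < 4)
    (a b c : ℝ)
    (ha : a = (1 + σ * Δt / 2) ^ 2)
    (hc : c = (1 - σ * Δt / 2) ^ 2)
    (hb : b = lam * Δt ^ 2 + 2 * (σ ^ 2 * Δt ^ 2 / 4 - 1))
    (p : ℕ → ℝ)
    (hp : ∀ n : ℕ, a * p (n + 2) + b * p (n + 1) + c * p n = 0) :
    ∃ C : ℝ, ∀ n : ℕ, |p n| ≤ C := by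
  subst ha hb hc
  set s : ℝ := σ * Δt / 2 with hs
  have hs0 : 0 ≤ s := by positivity
  set m : ℝ := 1 + s ^ 2 with hm
  have hm0 : 0 < m := by positivity
  set b : ℝ := lam * Δt ^ 2 + 2 * (σ ^ 2 * Δt ^ 2 / 4 - 1) with hb
  have hbm1 : 0 < 2 * m - b := by
    have : s ^ 2 = σ ^ 2 * Δt ^ 2 / 4 := by rw [hs]; ring
    rw [hb, hm, this]; nlinarith
  have hbm2 : 0 < 2 * m + b := by
    have : s ^ 2 = σ ^ 2 * Δt ^ 2 / 4 := by rw [hs]; ring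
    rw [hb, hm, this]
    nlinarith [mul_pos hlam (pow_pos hΔt 2)]
  set E : ℕ → ℝ := fun n => m * (p (n + 1) ^ 2 + p n ^ 2) + b * p (n + 1) * p n
    with hE
  have key : ∀ n, E (n + 1) - E n = -(2 * s) * (p (n + 2) - p n) ^ 2 := by
    intro n
    have h := hp n
    have hsb : σ ^ 2 * Δt ^ 2 / 4 = s ^ 2 := by rw [hs]; ring
    simp only [hE, hm, hb, hsb] at h ⊢
    linear_combination (p (n + 2) - p n) * h
  have hdec : ∀ n, E (n + 1) ≤ E n := by
    intro n
    have := key n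
    nlinarith [sq_nonneg (p (n + 2) - p n)]
  have hE0 : ∀ n, E n ≤ E 0 := by
    intro n
    induction n with
    | zero => exact le_refl _
    | succ k ih => exact (hdec k).trans ih
  set ε : ℝ := (4 * m ^ 2 - b ^ 2) / (4 * m) with hε
  have hε0 : 0 < ε := by
    apply div_pos _ (by linarith)
    nlinarith
  have hlow : ∀ n, ε * p n ^ 2 ≤ E n := by
    intro n
    have hid : 4 * m * (E n) - (4 * m ^ 2 - b ^ 2) * p n ^ 2 =
        (2 * m * p (n + 1) + b * p n) ^ 2 := by
      simp only [hE]; ring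
    have h1 : (4 * m ^ 2 - b ^ 2) * p n ^ 2 ≤ 4 * m * E n := by
      nlinarith [sq_nonneg (2 * m * p (n + 1) + b * p n)]
    rw [hε, div_mul_eq_mul_div, div_le_iff₀ (by linarith)]
    linarith [h1]
  refine ⟨Real.sqrt (E 0 / ε), fun n => ?_⟩
  have hpn : p n ^ 2 ≤ E 0 / ε := by
    rw [le_div_iff₀ hε0]
    calc p n ^ 2 * ε = ε * p n ^ 2 := by ring
    _ ≤ E n := hlow n
    _ ≤ E 0 := hE0 n
  calc |p n| = Real.sqrt (p n ^ 2) := (Real.sqrt_sq_eq_abs _).symm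
  _ ≤ Real.sqrt (E 0 / ε) := Real.sqrt_le_sqrt hpn
end

section
/- Let a, c > 0 and b ∈ ℝ with |b| < a + c and c ≤ a. Then every solution of the real linear recurrence a p^{n+1} + b p^n + c p^{n-1} = 0 is bounded on n ≥ 0. -/
/-- Schur–Cohn / von Neumann type criterion for second-order recurrences: if `a, c > 0`,
`|b| < a + c` and `c ≤ a`, then every solution of `a pⁿ⁺¹ + b pⁿ + c pⁿ⁻¹ = 0` is
bounded on `n ≥ 0`. -/
theorem second_order_recurrence_bounded
    (a b c : ℝ) (ha : 0 < a) (hc : 0 < c) (hb : |b| < a + c) (hca : c ≤ a)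
    (p : ℕ → ℝ)
    (hp : ∀ n : ℕ, a * p (n + 2) + b * p (n + 1) + c * p n = 0) :
    ∃ C : ℝ, ∀ n : ℕ, |p n| ≤ C := by
  obtain ⟨hb1, hb2⟩ := abs_lt.mp hb
  set E : ℕ → ℝ := fun n =>
    a ^ 2 * p (n + 1) ^ 2 + a * b * (p (n + 1) * p n) + (a ^ 2 + c ^ 2) / 2 * p n ^ 2 with hE
  have hmono : ∀ n, E (n + 1) ≤ E n := by
    intro n
    have h := hp n
    have h2 : a * p (n + 2) = -(b * p (n + 1) + c * p n) := by linarith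
    have hsub : a ^ 2 * p (n + 2) ^ 2 + a * b * (p (n + 2) * p (n + 1))
        = b * c * (p (n + 1) * p n) + c ^ 2 * p n ^ 2 := by
      have : a ^ 2 * p (n + 2) ^ 2 + a * b * (p (n + 2) * p (n + 1))
          = (a * p (n + 2)) * (a * p (n + 2)) + b * p (n + 1) * (a * p (n + 2)) := by ring
      rw [this, h2]; ring
    have key : E (n + 1) - E n =
        (c - a) * ((a + c) / 2 * (p (n + 1) ^ 2 + p n ^ 2) + b * (p (n + 1) * p n)) := by
      simp only [hE]
      nlinarith [hsub]
    have hnn : 0 ≤ (a + c) / 2 * (p (n + 1) ^ 2 + p n ^ 2) + b * (p (n + 1) * p n) := by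
      nlinarith [sq_nonneg (p (n+1) + p n), sq_nonneg (p (n+1) - p n)]
    rw [← sub_nonpos, key]
    exact mul_nonpos_of_nonpos_of_nonneg (by linarith) hnn
  have hEle : ∀ n, E n ≤ E 0 := by
    intro n
    induction n with
    | zero => exact le_rfl
    | succ k ih => exact (hmono k).trans ih
  have hD : 0 < 2 * (a ^ 2 + c ^ 2) - b ^ 2 := by nlinarith
  have hbound : ∀ n, p n ^ 2 ≤ 4 * E 0 / (2 * (a ^ 2 + c ^ 2) - b ^ 2) := by
    intro n
    rw [le_div_iff₀ hD]
    have h1 : E n ≤ E 0 := hEle n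
    have h2 : a ^ 2 * ((2 * (a ^ 2 + c ^ 2) - b ^ 2) * p n ^ 2) ≤ a ^ 2 * (4 * E n) := by
      have : (2 * a ^ 2 * p (n + 1) + a * b * p n) ^ 2
          + a ^ 2 * ((2 * (a ^ 2 + c ^ 2) - b ^ 2) * p n ^ 2) = a ^ 2 * (4 * E n) := by
        simp only [hE]; ring
      nlinarith [sq_nonneg (2 * a ^ 2 * p (n + 1) + a * b * p n)]
    have ha2 : 0 < a ^ 2 := by positivity
    nlinarith
  refine ⟨Real.sqrt (4 * E 0 / (2 * (a ^ 2 + c ^ 2) - b ^ 2)), fun n => ?_⟩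
  calc |p n| = Real.sqrt (p n ^ 2) := (Real.sqrt_sq_eq_abs _).symm
  _ ≤ _ := Real.sqrt_le_sqrt (hbound n)
end
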